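/- arXiv:1412.1208 — 3 statements merged into one kernel-verified Lean document; each statement's English description precedes it below -/
import Mathlib

section
/- Let $(G,H)$ be a discrete Hecke pair that is relatively unimodular, i.e., $L(x) = R(x)$ for all $x \in G$, where $L(x) = [H : H \cap xHx^{-1}]$ and $R(x) = L(x^{-1})$. Then $l_c(g) := \log L(g)$ defines a length function on $G$ whose kernel contains $H$. Moreover, $l_c(g) = 0$ if and only if $g$ belongs to the normalizer $N_G(H)$ of $H$ in $G$. -/
/-!
Write `H^x` for `xHx⁻¹`, so that `L(x) = [H : H ∩ H^x]`. Conjugating by `x` gives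
`[H^x : H^x ∩ H^{xy}] = L(y)`, and the tower `H ≥ H ∩ H^x ≥ H ∩ H^x ∩ H^{xy}` yields the
submultiplicativity `L(xy) ≤ L(x) L(y)`, which `log` turns into subadditivity. Finally `L(g) = 1`
means `H ≤ H^g`; by relative unimodularity also `L(g⁻¹) = 1`, i.e. `H^g ≤ H`, so `L(g) = 1` exactly
when `g` normalizes `H`.
-/

/-- A length function on a group `G`. -/
def IsLengthFun {G : Type*} [Group G] (l : G → ℝ) : Prop :=
  (∀ g, 0 ≤ l g) ∧ l 1 = 0 ∧ (∀ g : G, l g⁻¹ = l g) ∧ ∀ g h : G, l (g * h) ≤ l g + l h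

/-- `L(x) = [H : H ∩ xHx⁻¹]` (as `Subgroup.relindex`; `0` when infinite). -/
noncomputable def heckeL {G : Type*} [Group G] (H : Subgroup G) (x : G) : ℕ :=
  (H.map (MulAut.conj x).toMonoidHom).relIndex H

open Subgroup

theorem Real.log_natCast_eq_zero_iff {n : ℕ} (hn : n ≠ 0) : Real.log n = 0 ↔ n = 1 := by
  refine ⟨fun h => ?_, fun h => by simp [h]⟩
  exact_mod_cast Real.eq_one_of_pos_of_log_eq_zero (by positivity) h

theorem isLengthFun_log_natCast {G : Type*} [Group G] {f : G → ℕ} (hpos : ∀ g, f g ≠ 0)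
    (hone : f 1 = 1) (hinv : ∀ g, f g⁻¹ = f g) (hmul : ∀ g h, f (g * h) ≤ f g * f h) :
    IsLengthFun (fun g => Real.log (f g)) := by
  refine ⟨fun g => Real.log_natCast_nonneg _, by simp [hone], fun g => by simp only [hinv],
    fun g h => ?_⟩
  have hgh : (0 : ℝ) < f (g * h) := Nat.cast_pos.mpr (Nat.pos_of_ne_zero (hpos _))
  have hg : (f g : ℝ) ≠ 0 := Nat.cast_ne_zero.mpr (hpos g)
  have hh : (f h : ℝ) ≠ 0 := Nat.cast_ne_zero.mpr (hpos h)
  calc Real.log (f (g * h)) ≤ Real.log ((f g : ℝ) * f h) :=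
        Real.log_le_log hgh (by exact_mod_cast hmul g h)
    _ = Real.log (f g) + Real.log (f h) := Real.log_mul hg hh

namespace Subgroup

variable {G : Type*} [Group G]

theorem relIndex_le_relIndex_mul_relIndex {A B C : Subgroup G} (hBA : B.relIndex A ≠ 0)
    (hCB : C.relIndex B ≠ 0) : C.relIndex A ≤ C.relIndex B * B.relIndex A := by
  have hCBA : C.relIndex (B ⊓ A) ≤ C.relIndex B := relIndex_le_of_le_right inf_le_left hCB
  have hCBA' : C.relIndex (B ⊓ A) ≠ 0 := relIndex_ne_zero_trans hCB <| by
    rw [relIndex_eq_one.mpr inf_le_left]; exact one_ne_zero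
  calc C.relIndex A ≤ (C ⊓ B).relIndex A := by
        refine relIndex_le_of_le_left inf_le_left ?_
        rw [← relIndex_inf_mul_relIndex]
        exact mul_ne_zero hCBA' hBA
    _ = C.relIndex (B ⊓ A) * B.relIndex A := (relIndex_inf_mul_relIndex C B A).symm
    _ ≤ C.relIndex B * B.relIndex A := Nat.mul_le_mul_right _ hCBA

theorem map_conj_mul (x y : G) (H : Subgroup G) :
    H.map (MulAut.conj (x * y)).toMonoidHom
      = (H.map (MulAut.conj y).toMonoidHom).map (MulAut.conj x).toMonoidHom := by
  rw [map_mul, map_map]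
  rfl

end Subgroup

section Hecke

variable {G : Type*} [Group G] (H : Subgroup G)

theorem relIndex_map_conj_map_conj (x y : G) :
    (H.map (MulAut.conj (x * y)).toMonoidHom).relIndex (H.map (MulAut.conj x).toMonoidHom)
      = heckeL H y := by
  rw [map_conj_mul]
  exact relIndex_map_map_of_injective _ _ (MulAut.conj x).injective

theorem heckeL_mul_le (hfin : ∀ x : G, heckeL H x ≠ 0) (x y : G) :
    heckeL H (x * y) ≤ heckeL H x * heckeL H y := by
  have h := relIndex_le_relIndex_mul_relIndex (hfin x)
    ((relIndex_map_conj_map_conj H x y).symm ▸ hfin y)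
  rwa [relIndex_map_conj_map_conj, mul_comm] at h

theorem map_conj_map_conj_inv (g : G) :
    (H.map (MulAut.conj g⁻¹).toMonoidHom).map (MulAut.conj g).toMonoidHom = H := by
  rw [← map_conj_mul, mul_inv_cancel, map_one]
  exact map_id H

theorem heckeL_eq_one_iff_mem_normalizer {g : G} (hg : heckeL H g = heckeL H g⁻¹) :
    heckeL H g = 1 ↔ g ∈ normalizer (H : Set G) := by
  rw [mem_normalizer_iff_map_conj_eq]
  change _ ↔ H.map (MulAut.conj g).toMonoidHom = H
  refine ⟨fun h => le_antisymm ?_ (relIndex_eq_one.mp h), fun h => by rw [heckeL, h, relIndex_self]⟩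
  calc H.map (MulAut.conj g).toMonoidHom
      ≤ (H.map (MulAut.conj g⁻¹).toMonoidHom).map (MulAut.conj g).toMonoidHom :=
        map_mono (relIndex_eq_one.mp (hg.symm.trans h))
    _ = H := map_conj_map_conj_inv H g

end Hecke

theorem characteristic_length_function {G : Type*} [Group G] (H : Subgroup G)
    (hfin : ∀ x : G, heckeL H x ≠ 0)
    (hunimod : ∀ x : G, heckeL H x = heckeL H x⁻¹) :
    IsLengthFun (fun g : G => Real.log (heckeL H g)) ∧
    (∀ h ∈ H, Real.log (heckeL H h) = 0) ∧
    (∀ g : G, Real.log (heckeL H g) = 0 ↔ g ∈ Subgroup.normalizer (H : Set G)) := by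
  have hzero (g : G) : Real.log (heckeL H g) = 0 ↔ g ∈ normalizer (H : Set G) := by
    rw [Real.log_natCast_eq_zero_iff (hfin g), heckeL_eq_one_iff_mem_normalizer H (hunimod g)]
  refine ⟨isLengthFun_log_natCast hfin ?_ (fun g => (hunimod g).symm) (heckeL_mul_le H hfin),
    fun h hh => (hzero h).mpr (le_normalizer hh), hzero⟩
  exact (heckeL_eq_one_iff_mem_normalizer H (hunimod 1)).mpr (one_mem _)
end

section
/- Let $H$ be a compact subgroup of a locally compact group $G$ with Haar measure $\eta$ on $H$, and let $l$ be a length function on $G$ that is bounded on $H$. Define $l_1(g) := \int_H l(hgh^{-1})\, d\eta(h)$. Then $l_1$ is a length function on $G$ satisfying $l_1(hg) = l_1(gh)$ for all $g \in G$, $h \in H$, and $l_1$ is equivalent to $l$; in particular $l_1(g) \le \eta(H) l(g) + 2\int_H l(h) d\eta(h)$ and $l(g) \le \frac{1}{\eta(H)} l_1(g) + \frac{2}{\eta(H)} \int_H l(h) d\eta(h)$ for all $g \in G$. -/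
/-!
Conjugation by a fixed element is an automorphism, so each `g ↦ l (h g h⁻¹)` is a length function,
and length functions are closed under averaging. The Haar measure of a compact group is also
right invariant, so the substitution `k ↦ k h⁻¹` in the average shows that `l₁` is invariant
under conjugation by `H`, i.e. `l₁ (h g) = l₁ (g h)`. Finally,
`|l (h g h⁻¹) - l g| ≤ 2 l h` by subadditivity; integrating over `H` gives the two affine bounds.
-/

open MeasureTheory

namespace IsLengthFun

variable {G : Type*} [Group G] {l : G → ℝ}

theorem comp_monoidHom (hl : IsLengthFun l) {G' : Type*} [Group G'] (φ : G' →* G) :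
    IsLengthFun (l ∘ φ) := by
  obtain ⟨hnonneg, hone, hinv, hmul⟩ := hl
  refine ⟨fun g => hnonneg _, ?_, fun g => ?_, fun g h => ?_⟩ <;> simp [hone, hinv, hmul]

theorem comp_conj (hl : IsLengthFun l) (x : G) : IsLengthFun fun g => l (x * g * x⁻¹) :=
  hl.comp_monoidHom (MulAut.conj x).toMonoidHom

theorem conj_le (hl : IsLengthFun l) (g x : G) : l (x * g * x⁻¹) ≤ l g + 2 * l x := by
  have h₁ := hl.2.2.2 (x * g) x⁻¹
  have h₂ := hl.2.2.2 x g
  have h₃ := hl.2.2.1 x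
  linarith

theorem le_conj (hl : IsLengthFun l) (g x : G) : l g ≤ l (x * g * x⁻¹) + 2 * l x := by
  have h := hl.conj_le (x * g * x⁻¹) x⁻¹
  rwa [inv_inv, hl.2.2.1, show x⁻¹ * (x * g * x⁻¹) * x = g by group] at h

theorem integral {α : Type*} [MeasurableSpace α] {μ : Measure α} {L : α → G → ℝ}
    (hL : ∀ a, IsLengthFun (L a)) (hint : ∀ g, Integrable (fun a => L a g) μ) :
    IsLengthFun fun g => ∫ a, L a g ∂μ := by
  refine ⟨fun g => integral_nonneg fun a => (hL a).1 g, ?_, fun g => ?_, fun g h => ?_⟩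
  · simp [fun a => (hL a).2.1]
  · simp [fun a => (hL a).2.2.1 g]
  · rw [← integral_add (hint g) (hint h)]
    exact integral_mono (hint _) ((hint g).add (hint h)) fun a => (hL a).2.2.2 g h

variable {α : Type*} [MeasurableSpace α] {μ : Measure α} [IsFiniteMeasure μ]

theorem integrable_comp (hl : IsLengthFun l) {φ : α → G} (hφ : Measurable (l ∘ φ)) (C : ℝ)
    (hC : ∀ a, l (φ a) ≤ C) : Integrable (fun a => l (φ a)) μ :=
  .of_bound hφ.aestronglyMeasurable C <| .of_forall fun a => by
    rw [Real.norm_of_nonneg (hl.1 _)]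
    exact hC a

theorem integral_conj_le (hl : IsLengthFun l) {φ : α → G} {g : G}
    (hφ : Integrable (fun a => l (φ a)) μ)
    (hconj : Integrable (fun a => l (φ a * g * (φ a)⁻¹)) μ) :
    ∫ a, l (φ a * g * (φ a)⁻¹) ∂μ ≤ μ.real Set.univ * l g + 2 * ∫ a, l (φ a) ∂μ := by
  calc ∫ a, l (φ a * g * (φ a)⁻¹) ∂μ ≤ ∫ a, (l g + 2 * l (φ a)) ∂μ :=
        integral_mono hconj ((integrable_const _).add (hφ.const_mul 2)) fun a => hl.conj_le g _
    _ = μ.real Set.univ * l g + 2 * ∫ a, l (φ a) ∂μ := by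
        rw [integral_add (integrable_const _) (hφ.const_mul 2), integral_const, integral_const_mul,
          smul_eq_mul]

theorem mul_le_integral_conj (hl : IsLengthFun l) {φ : α → G} {g : G}
    (hφ : Integrable (fun a => l (φ a)) μ)
    (hconj : Integrable (fun a => l (φ a * g * (φ a)⁻¹)) μ) :
    μ.real Set.univ * l g ≤ ∫ a, l (φ a * g * (φ a)⁻¹) ∂μ + 2 * ∫ a, l (φ a) ∂μ := by
  calc μ.real Set.univ * l g = ∫ _, l g ∂μ := by rw [integral_const, smul_eq_mul]
    _ ≤ ∫ a, (l (φ a * g * (φ a)⁻¹) + 2 * l (φ a)) ∂μ :=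
        integral_mono (integrable_const _) (hconj.add (hφ.const_mul 2)) fun a => hl.le_conj g _
    _ = ∫ a, l (φ a * g * (φ a)⁻¹) ∂μ + 2 * ∫ a, l (φ a) ∂μ := by
        rw [integral_add hconj (hφ.const_mul 2), integral_const_mul]

end IsLengthFun

theorem MeasureTheory.Measure.isMulRightInvariant_of_compactSpace {K : Type*} [Group K]
    [TopologicalSpace K] [IsTopologicalGroup K] [CompactSpace K] [MeasurableSpace K] [BorelSpace K]
    (μ : Measure K) [μ.IsHaarMeasure] : μ.IsMulRightInvariant := by
  refine ⟨fun g => ?_⟩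
  obtain ⟨c, hc⟩ : ∃ c : NNReal, μ.map (· * g) = c • μ :=
    ⟨_, Measure.isMulInvariant_eq_smul_of_compactSpace _ μ⟩
  have huniv : (c : ENNReal) * μ Set.univ = 1 * μ Set.univ :=
    calc (c : ENNReal) * μ Set.univ = μ.map (· * g) Set.univ := by simp [hc]
      _ = 1 * μ Set.univ := by
        rw [one_mul, Measure.map_apply (measurable_mul_const g) .univ, Set.preimage_univ]
  have hc₁ : c = 1 := by
    exact_mod_cast (ENNReal.mul_left_inj (NeZero.ne _) (measure_ne_top μ _)).1 huniv
  rw [hc, hc₁, one_smul]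

theorem MeasureTheory.integral_conj_mul_comm {K G E : Type*} [Group K] [MeasurableSpace K]
    [MeasurableMul K] [Group G] [NormedAddCommGroup E] [NormedSpace ℝ E] (μ : Measure K)
    [μ.IsMulRightInvariant] (φ : K →* G) (f : G → E) (g : G) (x : K) :
    ∫ k, f (φ k * (φ x * g) * (φ k)⁻¹) ∂μ = ∫ k, f (φ k * (g * φ x) * (φ k)⁻¹) ∂μ := by
  rw [← integral_mul_right_eq_self _ x⁻¹]
  congr! 2 with k
  simp only [map_mul, map_inv]
  group

theorem averaged_length_function_general {G : Type*} [Group G] [TopologicalSpace G]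
    [IsTopologicalGroup G] [MeasurableSpace G] [BorelSpace G]
    (H : Subgroup G) [CompactSpace H]
    (η : Measure H) [η.IsHaarMeasure]
    (l : G → ℝ) (hl : IsLengthFun l) (hBorel : Measurable l)
    (hbdd : ∃ C : ℝ, ∀ h : H, l (h : G) ≤ C) :
    let l₁ : G → ℝ := fun g => ∫ h : H, l ((h : G) * g * (h : G)⁻¹) ∂η
    IsLengthFun l₁ ∧
    (∀ (g : G) (h : H), l₁ ((h : G) * g) = l₁ (g * (h : G))) ∧
    (∀ g : G, l₁ g ≤ (η Set.univ).toReal * l g + 2 * ∫ h : H, l (h : G) ∂η) ∧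
    (∀ g : G, l g ≤ (1 / (η Set.univ).toReal) * l₁ g +
      (2 / (η Set.univ).toReal) * ∫ h : H, l (h : G) ∂η) ∧
    (∃ c₁ c₀ : ℝ, 0 ≤ c₁ ∧ 0 ≤ c₀ ∧ ∀ g : G, l₁ g ≤ c₁ * l g + c₀) ∧
    (∃ c₁' c₀' : ℝ, 0 ≤ c₁' ∧ 0 ≤ c₀' ∧ ∀ g : G, l g ≤ c₁' * l₁ g + c₀') := by
  intro l₁
  have : BorelSpace H := Subtype.borelSpace _
  have : η.IsMulRightInvariant := η.isMulRightInvariant_of_compactSpace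
  obtain ⟨C, hC⟩ := hbdd
  have hint : Integrable (fun h : H => l h) η :=
    hl.integrable_comp (hBorel.comp measurable_subtype_coe) C hC
  have hint_conj (g : G) : Integrable (fun h : H => l (h * g * (h : G)⁻¹)) η := by
    have hconj : Continuous fun x : G => x * g * x⁻¹ := by fun_prop
    refine hl.integrable_comp (hBorel.comp <| hconj.measurable.comp measurable_subtype_coe)
      (l g + 2 * C) fun h => ?_
    linarith [hl.conj_le g h, hC h]
  have hmass : 0 < (η Set.univ).toReal := measureReal_univ_pos
  have hJ : 0 ≤ ∫ h : H, l h ∂η := integral_nonneg fun h => hl.1 h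
  have hupper (g : G) := hl.integral_conj_le hint (hint_conj g)
  have hlower (g : G) : l g ≤ (1 / (η Set.univ).toReal) * l₁ g +
      (2 / (η Set.univ).toReal) * ∫ h : H, l (h : G) ∂η := by
    rw [div_mul_eq_mul_div, div_mul_eq_mul_div, one_mul, ← add_div, le_div_iff₀ hmass, mul_comm]
    exact hl.mul_le_integral_conj hint (hint_conj g)
  exact ⟨IsLengthFun.integral (fun h => hl.comp_conj h) hint_conj,
    fun g h => integral_conj_mul_comm η H.subtype l g h, hupper, hlower,
    ⟨_, _, ENNReal.toReal_nonneg, by positivity, hupper⟩,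
    ⟨_, _, by positivity, by positivity, hlower⟩⟩

theorem averaged_length_function {G : Type*} [Group G] [TopologicalSpace G]
    [IsTopologicalGroup G] [LocallyCompactSpace G] [MeasurableSpace G] [BorelSpace G]
    (H : Subgroup G) [CompactSpace H]
    (η : Measure H) [η.IsHaarMeasure]
    (l : G → ℝ) (hl : IsLengthFun l) (hBorel : Measurable l)
    (hbdd : ∃ C : ℝ, ∀ h : H, l (h : G) ≤ C) :
    let l₁ : G → ℝ := fun g => ∫ h : H, l ((h : G) * g * (h : G)⁻¹) ∂η
    IsLengthFun l₁ ∧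
    (∀ (g : G) (h : H), l₁ ((h : G) * g) = l₁ (g * (h : G))) ∧
    (∀ g : G, l₁ g ≤ (η Set.univ).toReal * l g + 2 * ∫ h : H, l (h : G) ∂η) ∧
    (∀ g : G, l g ≤ (1 / (η Set.univ).toReal) * l₁ g +
      (2 / (η Set.univ).toReal) * ∫ h : H, l (h : G) ∂η) ∧
    (∃ c₁ c₀ : ℝ, 0 ≤ c₁ ∧ 0 ≤ c₀ ∧ ∀ g : G, l₁ g ≤ c₁ * l g + c₀) ∧
    (∃ c₁' c₀' : ℝ, 0 ≤ c₁' ∧ 0 ≤ c₀' ∧ ∀ g : G, l g ≤ c₁' * l₁ g + c₀') :=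
  averaged_length_function_general H η l hl hBorel hbdd
end

section
/- Let $H$ be a compact subgroup of a locally compact group $G$, and let $l_1$ be a length function on $G$ bounded on $H$ and satisfying $l_1(hg) = l_1(gh)$ for all $g \in G$, $h \in H$. Define $l'(g) := \inf_{h, h' \in H} l_1(hgh')$. Then $l'(g) = \inf_{h \in H} l_1(hg) = \inf_{h \in H} l_1(gh)$ for all $g$, $l'$ is a length function on $G$ whose kernel contains $H$, and $l'$ is equivalent to $l_1$. -/
namespace IsLengthFun

variable {G : Type*} [Group G] {l : G → ℝ}

theorem nonneg (hl : IsLengthFun l) (g : G) : 0 ≤ l g := hl.1 g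

theorem map_one (hl : IsLengthFun l) : l 1 = 0 := hl.2.1

theorem map_inv (hl : IsLengthFun l) (g : G) : l g⁻¹ = l g := hl.2.2.1 g

theorem map_mul_le (hl : IsLengthFun l) (g h : G) : l (g * h) ≤ l g + l h := hl.2.2.2 g h

theorem bddBelow_range_comp (hl : IsLengthFun l) {ι : Type*} (f : ι → G) :
    BddBelow (Set.range fun i => l (f i)) :=
  ⟨0, by rintro _ ⟨i, rfl⟩; exact hl.nonneg (f i)⟩

theorem map_mul_mul_le (hl : IsLengthFun l) (a g b : G) : l (a * g * b) ≤ l a + l g + l b :=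
  (hl.map_mul_le _ b).trans (by linarith [hl.map_mul_le a g])

theorem le_map_mul_mul_add (hl : IsLengthFun l) {C : ℝ} {a b : G} (ha : l a ≤ C) (hb : l b ≤ C)
    (g : G) : l g ≤ l (a * g * b) + 2 * C := by
  have hg : g = a⁻¹ * (a * g * b) * b⁻¹ := by group
  have := hl.map_mul_mul_le a⁻¹ (a * g * b) b⁻¹
  rw [← hg, hl.map_inv, hl.map_inv] at this
  linarith

end IsLengthFun

section DoubleCosetInf

variable {G : Type*} [Group G] (H : Subgroup G) (l : G → ℝ)

noncomputable def doubleCosetInf (g : G) : ℝ :=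
  ⨅ p : H × H, l (p.1 * g * p.2)

variable {H l}

theorem doubleCosetInf_eq_iInf_mul_left (hcomm : ∀ (g : G) (h : H), l (h * g) = l (g * h))
    (g : G) : doubleCosetInf H l g = ⨅ h : H, l (h * g) := by
  have hswap : Function.Surjective fun p : H × H => p.2 * p.1 := fun h => ⟨(1, h), mul_one h⟩
  rw [doubleCosetInf, ← hswap.iInf_comp]
  congr 1 with p
  rw [← hcomm, Subgroup.coe_mul, mul_assoc]

theorem doubleCosetInf_eq_iInf_mul_right (hcomm : ∀ (g : G) (h : H), l (h * g) = l (g * h))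
    (g : G) : doubleCosetInf H l g = ⨅ h : H, l (g * h) := by
  have hswap : Function.Surjective fun p : H × H => p.2 * p.1 := fun h => ⟨(h, 1), one_mul h⟩
  rw [doubleCosetInf, ← hswap.iInf_comp]
  congr 1 with p
  rw [mul_assoc, hcomm, Subgroup.coe_mul, mul_assoc]

theorem doubleCosetInf_le (hl : IsLengthFun l) {a b : G} (ha : a ∈ H) (hb : b ∈ H) (g : G) :
    doubleCosetInf H l g ≤ l (a * g * b) :=
  ciInf_le (hl.bddBelow_range_comp fun p : H × H => p.1 * g * p.2) (⟨a, ha⟩, ⟨b, hb⟩)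

theorem doubleCosetInf_le_self (hl : IsLengthFun l) (g : G) : doubleCosetInf H l g ≤ l g := by
  simpa using doubleCosetInf_le hl H.one_mem H.one_mem g

theorem le_doubleCosetInf_add (hl : IsLengthFun l) {C : ℝ} (hC : ∀ h : H, l h ≤ C) (g : G) :
    l g ≤ doubleCosetInf H l g + 2 * C := by
  have : l g - 2 * C ≤ doubleCosetInf H l g :=
    le_ciInf fun p => by linarith [hl.le_map_mul_mul_add (hC p.1) (hC p.2) g]
  linarith

theorem doubleCosetInf_nonneg (hl : IsLengthFun l) (g : G) : 0 ≤ doubleCosetInf H l g :=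
  le_ciInf fun _ => hl.nonneg _

theorem doubleCosetInf_eq_zero_of_mem (hl : IsLengthFun l) {h : G} (hh : h ∈ H) :
    doubleCosetInf H l h = 0 := by
  refine le_antisymm ?_ (doubleCosetInf_nonneg hl h)
  simpa [hl.map_one] using doubleCosetInf_le hl (inv_mem hh) H.one_mem h

theorem IsLengthFun.doubleCosetInf (hl : IsLengthFun l)
    (hcomm : ∀ (g : G) (h : H), l (h * g) = l (g * h)) : IsLengthFun (doubleCosetInf H l) := by
  refine ⟨doubleCosetInf_nonneg hl, doubleCosetInf_eq_zero_of_mem hl H.one_mem, fun g => ?_,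
    fun g k => ?_⟩
  · rw [doubleCosetInf_eq_iInf_mul_left hcomm, doubleCosetInf_eq_iInf_mul_right hcomm,
      ← (Equiv.inv H).iInf_comp]
    congr 1 with h
    rw [← hl.map_inv, mul_inv_rev, inv_inv, Equiv.inv_apply, Subgroup.coe_inv, inv_inv]
  · rw [doubleCosetInf_eq_iInf_mul_left hcomm g, doubleCosetInf_eq_iInf_mul_right hcomm k]
    refine le_ciInf_add_ciInf fun h h' => (doubleCosetInf_le hl h.2 h'.2 (g * k)).trans ?_
    rw [show h * (g * k) * h' = h * g * (k * h') by group]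
    exact hl.map_mul_le _ _

end DoubleCosetInf

theorem infimized_length_function_general {G : Type*} [Group G]
    (H : Subgroup G)
    (l₁ : G → ℝ) (hl₁ : IsLengthFun l₁)
    (hbdd : ∃ C : ℝ, ∀ h : H, l₁ (h : G) ≤ C)
    (hcomm : ∀ (g : G) (h : H), l₁ ((h : G) * g) = l₁ (g * (h : G))) :
    let l' : G → ℝ := fun g => ⨅ p : H × H, l₁ ((p.1 : G) * g * (p.2 : G))
    (∀ g : G, l' g = ⨅ h : H, l₁ ((h : G) * g)) ∧
    (∀ g : G, l' g = ⨅ h : H, l₁ (g * (h : G))) ∧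
    IsLengthFun l' ∧
    (∀ h ∈ H, l' h = 0) ∧
    (∃ c₁ c₀ : ℝ, 0 ≤ c₁ ∧ 0 ≤ c₀ ∧ ∀ g : G, l' g ≤ c₁ * l₁ g + c₀) ∧
    (∃ c₁' c₀' : ℝ, 0 ≤ c₁' ∧ 0 ≤ c₀' ∧ ∀ g : G, l₁ g ≤ c₁' * l' g + c₀') := by
  intro l'
  obtain ⟨C, hC⟩ := hbdd
  have hC₀ : 0 ≤ C := (hl₁.nonneg 1).trans (hC 1)
  refine ⟨doubleCosetInf_eq_iInf_mul_left hcomm, doubleCosetInf_eq_iInf_mul_right hcomm,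
    hl₁.doubleCosetInf hcomm, fun h hh => doubleCosetInf_eq_zero_of_mem hl₁ hh,
    ⟨1, 0, zero_le_one, le_rfl, fun g => ?_⟩, ⟨1, 2 * C, zero_le_one, by positivity, fun g => ?_⟩⟩
  · rw [one_mul, add_zero]
    exact doubleCosetInf_le_self hl₁ g
  · rw [one_mul]
    exact le_doubleCosetInf_add hl₁ hC g

theorem infimized_length_function {G : Type*} [Group G] [TopologicalSpace G]
    [IsTopologicalGroup G] [LocallyCompactSpace G]
    (H : Subgroup G) [CompactSpace H]
    (l₁ : G → ℝ) (hl₁ : IsLengthFun l₁)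
    (hbdd : ∃ C : ℝ, ∀ h : H, l₁ (h : G) ≤ C)
    (hcomm : ∀ (g : G) (h : H), l₁ ((h : G) * g) = l₁ (g * (h : G))) :
    let l' : G → ℝ := fun g => ⨅ p : H × H, l₁ ((p.1 : G) * g * (p.2 : G))
    (∀ g : G, l' g = ⨅ h : H, l₁ ((h : G) * g)) ∧
    (∀ g : G, l' g = ⨅ h : H, l₁ (g * (h : G))) ∧
    IsLengthFun l' ∧
    (∀ h ∈ H, l' h = 0) ∧
    (∃ c₁ c₀ : ℝ, 0 ≤ c₁ ∧ 0 ≤ c₀ ∧ ∀ g : G, l' g ≤ c₁ * l₁ g + c₀) ∧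
    (∃ c₁' c₀' : ℝ, 0 ≤ c₁' ∧ 0 ≤ c₀' ∧ ∀ g : G, l₁ g ≤ c₁' * l' g + c₀') :=
  infimized_length_function_general H l₁ hl₁ hbdd hcomm
end
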